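/- For every real δ with 1/2 < δ < 1, Ω(δ) = 1/(π·δ·(2δ−1)) + (1/(2√π)) · ( 2·Γ(1/2−δ)/Γ(1−δ) − Γ(−δ)/Γ(3/2−δ) ), where Γ denotes the Gamma function (note that for 1/2 < δ < 1 none of the arguments 1/2−δ, 1−δ, −δ, 3/2−δ is a nonpositive integer, so all Gamma values are well defined and the denominators are nonzero). -/

import Mathlib

/-!
Substituting `r = 1 - x²` (so that `√(1 - r) = x`) turns `π Ω(δ)` into a combination of the
integrals `J(c) = ∫₀¹ (1 - x)^(-c) (1 + x)^(-c-1) dx = ∫₀¹ (1 - x²)^(-c) / (1 + x) dx` at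
`c = 1/2, δ, δ - 1/2`. Differentiating `(1 - x)^(1-c) (1 + x)^(-c)` gives
`2c J(c) + (1 - 2c) ∫₀¹ (1 - x²)^(-c) dx = 1`, and after `t = x²` the last integral is the Beta
value `√π Γ(1 - c) / (2 Γ(3/2 - c))`. The Gamma values at `-δ` and `1/2 - δ` in the final formula
come from `Γ(s + 1) = s Γ(s)`.
-/

open MeasureTheory

/-- The function Ω from the paper: for δ < 1, δ ≠ 1/2,
`Ω(δ) = (1/π) ∫₀¹ (1/(1+√(1−r))) (1−r)^(−1/2) ((1/(1−2δ))(r^(−1/2) − r^(−δ)) + r^(1/2−δ)) dr`. -/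
noncomputable def Omega (δ : ℝ) : ℝ :=
  (1 / Real.pi) *
    ∫ r in Set.Ioo (0:ℝ) 1,
      (1 / (1 + Real.sqrt (1 - r))) * (1 - r) ^ (-(1:ℝ)/2) *
        ((1 / (1 - 2*δ)) * (r ^ (-(1:ℝ)/2) - r ^ (-δ)) + r ^ ((1:ℝ)/2 - δ))

open Set Real

noncomputable def jacobiIntegral (c : ℝ) : ℝ :=
  ∫ x in Ioo (0:ℝ) 1, (1 - x) ^ (-c) * (1 + x) ^ (-c - 1)

theorem setIntegral_Ioo_comp_one_sub (g : ℝ → ℝ) :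
    ∫ x in Ioo (0:ℝ) 1, g (1 - x) = ∫ x in Ioo (0:ℝ) 1, g x := by
  simp_rw [← integral_Ioc_eq_integral_Ioo, ← intervalIntegral.integral_of_le zero_le_one]
  simp [intervalIntegral.integral_comp_sub_left g (1:ℝ)]

theorem image_sq_Ioo_zero_one : (fun x : ℝ => x ^ 2) '' Ioo 0 1 = Ioo 0 1 := by
  ext t
  refine ⟨?_, fun ht => ⟨√t, ⟨sqrt_pos.2 ht.1, (sqrt_lt' one_pos).2 (by simpa using ht.2)⟩,
    sq_sqrt ht.1.le⟩⟩
  rintro ⟨x, hx, rfl⟩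
  exact ⟨pow_pos hx.1 2, pow_lt_one₀ hx.1.le hx.2 two_ne_zero⟩

theorem setIntegral_Ioo_comp_sq (g : ℝ → ℝ) :
    ∫ x in Ioo (0:ℝ) 1, 2 * x * g (x ^ 2) = ∫ t in Ioo (0:ℝ) 1, g t := by
  have h := integral_image_eq_integral_abs_deriv_smul (measurableSet_Ioo (a := (0:ℝ)) (b := 1))
    (fun x _ => (hasDerivAt_pow 2 x).hasDerivWithinAt)
    ((pow_left_strictMonoOn₀ two_ne_zero).injOn.mono
      (Ioo_subset_Icc_self.trans Icc_subset_Ici_self)) g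
  rw [image_sq_Ioo_zero_one] at h
  rw [h]
  refine setIntegral_congr_fun measurableSet_Ioo fun x hx => ?_
  simp [abs_of_pos hx.1]

theorem intervalIntegrable_one_sub_rpow_mul_one_add_rpow {p : ℝ} (hp : -1 < p) (q : ℝ) :
    IntervalIntegrable (fun x : ℝ => (1 - x) ^ p * (1 + x) ^ q) volume 0 1 := by
  have h : IntervalIntegrable (fun x : ℝ => (1 - x) ^ p) volume 0 1 := by
    simpa using
      ((intervalIntegral.intervalIntegrable_rpow' (a := 0) (b := 1) hp).comp_sub_left 1).symm
  refine h.mul_continuousOn (ContinuousOn.rpow_const (by fun_prop) fun x hx => Or.inl ?_)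
  rw [uIcc_of_le zero_le_one] at hx
  linarith [hx.1]

theorem integrableOn_one_sub_rpow_mul_one_add_rpow {p : ℝ} (hp : -1 < p) (q : ℝ) :
    IntegrableOn (fun x : ℝ => (1 - x) ^ p * (1 + x) ^ q) (Ioo 0 1) :=
  (intervalIntegrable_iff_integrableOn_Ioo_of_le zero_le_one).1
    (intervalIntegrable_one_sub_rpow_mul_one_add_rpow hp q)

theorem one_sub_rpow_mul_one_add_rpow_sub_one {x : ℝ} (hx : x ∈ Ioo (-1:ℝ) 1) (c : ℝ) :
    (1 - x) ^ c * (1 + x) ^ (c - 1) = (1 - x ^ 2) ^ c / (1 + x) := by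
  have h₁ : 0 < 1 - x := by linarith [hx.2]
  have h₂ : 0 < 1 + x := by linarith [hx.1]
  rw [rpow_sub_one h₂.ne', show 1 - x ^ 2 = (1 - x) * (1 + x) by ring, mul_rpow h₁.le h₂.le,
    mul_div_assoc]

theorem hasDerivAt_neg_one_sub_rpow_mul_one_add_rpow (c : ℝ) {x : ℝ}
    (hx : x ∈ Ioo (-1:ℝ) 1) :
    HasDerivAt (fun y : ℝ => -((1 - y) ^ (1 - c) * (1 + y) ^ (-c)))
      (2 * c * ((1 - x) ^ (-c) * (1 + x) ^ (-c - 1)) + (1 - 2 * c) * (1 - x ^ 2) ^ (-c)) x := by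
  have h₁ : 0 < 1 - x := by linarith [hx.2]
  have h₂ : 0 < 1 + x := by linarith [hx.1]
  have d₁ := ((hasDerivAt_id x).const_sub 1).rpow_const (p := 1 - c) (Or.inl h₁.ne')
  have d₂ := ((hasDerivAt_id x).const_add 1).rpow_const (p := -c) (Or.inl h₂.ne')
  refine (d₁.mul d₂).neg.congr_deriv ?_
  simp only [id]
  rw [show 1 - x ^ 2 = (1 - x) * (1 + x) by ring, mul_rpow h₁.le h₂.le,
    show 1 - c - 1 = -c by ring, rpow_sub_one h₂.ne', show 1 - c = -c + 1 by ring,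
    rpow_add_one h₁.ne']
  field_simp
  ring

theorem integrableOn_one_sub_sq_rpow {p : ℝ} (hp : -1 < p) :
    IntegrableOn (fun x : ℝ => (1 - x ^ 2) ^ p) (Ioo 0 1) := by
  refine (integrableOn_one_sub_rpow_mul_one_add_rpow hp p).congr_fun (fun x hx => ?_)
    measurableSet_Ioo
  rw [show 1 - x ^ 2 = (1 - x) * (1 + x) by ring,
    mul_rpow (by linarith [hx.2]) (by linarith [hx.1])]

theorem two_mul_mul_jacobiIntegral_add {c : ℝ} (hc : c < 1) :
    2 * c * jacobiIntegral c + (1 - 2 * c) * ∫ x in Ioo (0:ℝ) 1, (1 - x ^ 2) ^ (-c) = 1 := by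
  have hJ := integrableOn_one_sub_rpow_mul_one_add_rpow (p := -c) (by linarith) (-c - 1)
  have hE := integrableOn_one_sub_sq_rpow (p := -c) (by linarith)
  have hFTC := intervalIntegral.integral_eq_sub_of_hasDerivAt_of_le zero_le_one
    (f := fun y : ℝ => -((1 - y) ^ (1 - c) * (1 + y) ^ (-c))) ?cont
    (fun x hx => hasDerivAt_neg_one_sub_rpow_mul_one_add_rpow c ⟨by linarith [hx.1], hx.2⟩)
    ((intervalIntegrable_iff_integrableOn_Ioo_of_le zero_le_one).2
      ((hJ.const_mul (2 * c)).add (hE.const_mul (1 - 2 * c))))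
  case cont =>
    refine (ContinuousOn.mul ?_ ?_).neg <;> refine ContinuousOn.rpow_const (by fun_prop) ?_
    · exact fun x _ => Or.inr (by linarith)
    · exact fun x hx => Or.inl (by linarith [hx.1])
  rw [intervalIntegral.integral_of_le zero_le_one, integral_Ioc_eq_integral_Ioo,
    integral_add (hJ.const_mul _) (hE.const_mul _), integral_const_mul, integral_const_mul]
    at hFTC
  rw [jacobiIntegral, hFTC]
  norm_num [zero_rpow (show 1 - c ≠ 0 by linarith)]

theorem integral_rpow_mul_one_sub_rpow {a b : ℝ} (ha : 0 < a) (hb : 0 < b) :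
    ∫ x in Ioo (0:ℝ) 1, x ^ (a - 1) * (1 - x) ^ (b - 1)
      = Gamma a * Gamma b / Gamma (a + b) := by
  have hβ : Complex.betaIntegral a b
      = ((∫ x in (0:ℝ)..1, x ^ (a - 1) * (1 - x) ^ (b - 1) : ℝ) : ℂ) := by
    rw [Complex.betaIntegral, ← intervalIntegral.integral_ofReal]
    refine intervalIntegral.integral_congr fun x hx => ?_
    rw [uIcc_of_le zero_le_one] at hx
    push_cast
    rw [Complex.ofReal_cpow hx.1, Complex.ofReal_cpow (by linarith [hx.2] : (0:ℝ) ≤ 1 - x)]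
    push_cast
    ring
  have hΓ := Complex.Gamma_mul_Gamma_eq_betaIntegral (s := a) (t := b) (by simpa) (by simpa)
  rw [hβ, ← Complex.ofReal_add, Complex.Gamma_ofReal, Complex.Gamma_ofReal, Complex.Gamma_ofReal,
    ← Complex.ofReal_mul, ← Complex.ofReal_mul, Complex.ofReal_inj] at hΓ
  rw [← integral_Ioc_eq_integral_Ioo, ← intervalIntegral.integral_of_le zero_le_one, hΓ,
    mul_div_cancel_left₀ _ (Gamma_pos_of_pos (add_pos ha hb)).ne']

theorem integral_one_sub_sq_rpow {p : ℝ} (hp : -1 < p) :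
    ∫ x in Ioo (0:ℝ) 1, (1 - x ^ 2) ^ p = √π * Gamma (p + 1) / (2 * Gamma (p + 3 / 2)) := by
  have hβ := integral_rpow_mul_one_sub_rpow (a := 1 / 2) (b := p + 1) one_half_pos (by linarith)
  rw [Gamma_one_half_eq, show 1 / 2 + (p + 1) = p + 3 / 2 by ring,
    show p + 1 - 1 = p by ring] at hβ
  have hsub : ∫ x in Ioo (0:ℝ) 1, (1 - x ^ 2) ^ p
      = ∫ t in Ioo (0:ℝ) 1, t ^ (1 / 2 - 1 : ℝ) * (1 - t) ^ p / 2 := by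
    rw [← setIntegral_Ioo_comp_sq (fun t => t ^ (1 / 2 - 1 : ℝ) * (1 - t) ^ p / 2)]
    refine setIntegral_congr_fun measurableSet_Ioo fun x hx => ?_
    rw [← rpow_two, ← rpow_mul hx.1.le]
    norm_num [rpow_neg_one]
    field_simp [hx.1.ne']
  rw [hsub, integral_div, hβ]
  ring

theorem jacobiIntegral_one_half : jacobiIntegral (1 / 2) = 1 := by
  simpa using two_mul_mul_jacobiIntegral_add (c := 1 / 2) (by norm_num)

theorem jacobiIntegral_eq {c : ℝ} (hc₀ : 0 < c) (hc₁ : c < 1) :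
    jacobiIntegral c
      = (1 - (1 - 2 * c) * (√π * Gamma (1 - c) / (2 * Gamma (3 / 2 - c)))) / (2 * c) := by
  have h := two_mul_mul_jacobiIntegral_add hc₁
  rw [integral_one_sub_sq_rpow (by linarith), show -c + 1 = 1 - c by ring,
    show -c + 3 / 2 = 3 / 2 - c by ring] at h
  rw [eq_div_iff (by positivity)]
  linarith

theorem Omega_eq_jacobiIntegral {δ : ℝ} (hδ : δ < 1) :
    Omega δ = ((2 * jacobiIntegral (1 / 2) - 2 * jacobiIntegral δ) / (1 - 2 * δ)
      + 2 * jacobiIntegral (δ - 1 / 2)) / π := by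
  have hpt : ∀ x ∈ Ioo (0:ℝ) 1,
      2 * x * ((1 / (1 + √(1 - (1 - x ^ 2)))) * (1 - (1 - x ^ 2)) ^ (-(1:ℝ) / 2) *
        ((1 / (1 - 2 * δ)) * ((1 - x ^ 2) ^ (-(1:ℝ) / 2) - (1 - x ^ 2) ^ (-δ))
          + (1 - x ^ 2) ^ ((1:ℝ) / 2 - δ)))
      = (2 * ((1 - x) ^ (-(1 / 2 : ℝ)) * (1 + x) ^ (-(1 / 2 : ℝ) - 1))
          - 2 * ((1 - x) ^ (-δ) * (1 + x) ^ (-δ - 1))) / (1 - 2 * δ)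
        + 2 * ((1 - x) ^ (-(δ - 1 / 2)) * (1 + x) ^ (-(δ - 1 / 2) - 1)) := by
    intro x hx
    have hx' : x ∈ Ioo (-1:ℝ) 1 := ⟨by linarith [hx.1], hx.2⟩
    simp only [one_sub_rpow_mul_one_add_rpow_sub_one hx']
    have h₁ : 1 + x ≠ 0 := by linarith [hx.1]
    rw [sub_sub_cancel, sqrt_sq hx.1.le, ← rpow_two, ← rpow_mul hx.1.le,
      show (1:ℝ) / 2 - δ = -(δ - 1 / 2) by ring]
    norm_num [rpow_neg_one]
    field_simp [hx.1.ne', h₁]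
  have hj : ∀ {c : ℝ}, c < 1 →
      IntegrableOn (fun x : ℝ => 2 * ((1 - x) ^ (-c) * (1 + x) ^ (-c - 1))) (Ioo 0 1) :=
    fun hc => (integrableOn_one_sub_rpow_mul_one_add_rpow (by linarith) _).const_mul 2
  rw [Omega, ← setIntegral_Ioo_comp_one_sub, ← setIntegral_Ioo_comp_sq,
    setIntegral_congr_fun measurableSet_Ioo hpt,
    integral_add ?_ (hj (by linarith)), integral_div, integral_sub (hj (by norm_num)) (hj hδ)]
  · simp only [integral_const_mul, jacobiIntegral]
    ring
  · exact ((hj (by norm_num)).sub (hj hδ)).div_const _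

theorem Omega_eq_gamma (δ : ℝ) (hδ1 : 1/2 < δ) (hδ2 : δ < 1) :
    Omega δ =
      1 / (Real.pi * δ * (2*δ - 1)) +
        (1 / (2 * Real.sqrt Real.pi)) *
          (2 * Real.Gamma (1/2 - δ) / Real.Gamma (1 - δ) -
            Real.Gamma (-δ) / Real.Gamma (3/2 - δ)) := by
  have hΓ₁ : Gamma (1 / 2 - δ) = Gamma (3 / 2 - δ) / (1 / 2 - δ) := by
    rw [eq_div_iff (by linarith), mul_comm, ← Gamma_add_one (by linarith)]; ring_nf
  have hΓ₂ : Gamma (-δ) = Gamma (1 - δ) / -δ := by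
    rw [eq_div_iff (by linarith), mul_comm, ← Gamma_add_one (by linarith)]; ring_nf
  have hΓ₃ : Gamma (2 - δ) = (1 - δ) * Gamma (1 - δ) := by
    rw [← Gamma_add_one (by linarith)]; ring_nf
  have hA := (Gamma_pos_of_pos (show 0 < 1 - δ by linarith)).ne'
  have hB := (Gamma_pos_of_pos (show 0 < 3 / 2 - δ by linarith)).ne'
  -- `√π` and the Gamma values become atoms, so that `field_simp` clears every denominator
  obtain ⟨s, hs, hπ⟩ : ∃ s, √π = s ∧ π = s ^ 2 := ⟨√π, rfl, (sq_sqrt pi_pos.le).symm⟩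
  have hs₀ : s ≠ 0 := hs ▸ (sqrt_pos.2 pi_pos).ne'
  rw [Omega_eq_jacobiIntegral hδ2, jacobiIntegral_one_half, jacobiIntegral_eq (by linarith) hδ2,
    jacobiIntegral_eq (by linarith) (by linarith), show 1 - (δ - 1 / 2) = 3 / 2 - δ by ring,
    show 3 / 2 - (δ - 1 / 2) = 2 - δ by ring, hΓ₁, hΓ₂, hΓ₃, hs, hπ]
  generalize Gamma (1 - δ) = A at hA ⊢
  generalize Gamma (3 / 2 - δ) = B at hB ⊢
  have : 1 - 2 * δ ≠ 0 := by linarith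
  have : 2 * δ - 1 ≠ 0 := by linarith
  have : 1 - δ ≠ 0 := by linarith
  have : δ ≠ 0 := by linarith
  field_simp
  ring
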